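/- arXiv:1911.12622 — 2 statements merged into one kernel-verified Lean document; each statement's English description precedes it below -/
import Mathlib

section
/- For every linear subspace W of F^n over a field F, there exists an n×n reduced row echelon form R over F such that the row space of R equals W. -/
/-!
A vector of `W` vanishing on the pivot columns of `W` (the columns in which some vector of `W`
has its leading entry) is zero, because its own leading column would be a pivot column.
Conversely every assignment of values to the pivot columns is attained in `W`: vectors of `W`
leading at the pivot columns form an upper triangular matrix with nonzero diagonal. Hence `W`
has a basis restricting to the standard basis on the pivot columns; each basis vector leads at
its own pivot column, and listed in the order of these columns, padded by zero rows, they form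
the required matrix.
-/

/-- `k` is the pivot column of row `i` of `R`: the leading (first nonzero) entry of row `i`
is a `1` in column `k`, and column `k` has zeros in all other positions. -/
def IsPivot {F : Type*} [Field F] {n : ℕ} (R : Matrix (Fin n) (Fin n) F) (i k : Fin n) : Prop :=
  R i k = 1 ∧ (∀ j : Fin n, j < k → R i j = 0) ∧ (∀ i' : Fin n, i' ≠ i → R i' k = 0)

/-- `R` is in reduced row echelon form: every zero row lies below all nonzero rows, every
nonzero row has a pivot (leading `1` whose column is otherwise zero), and pivot columns
strictly increase down the rows. -/
def IsRREF {F : Type*} [Field F] {n : ℕ} (R : Matrix (Fin n) (Fin n) F) : Prop :=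
  (∀ i j : Fin n, i < j → R i = 0 → R j = 0) ∧
  (∀ i : Fin n, R i ≠ 0 → ∃ k : Fin n, IsPivot R i k) ∧
  (∀ i i' k k' : Fin n, i < i' → IsPivot R i k → IsPivot R i' k' → k < k')

section LeadingIndex

variable {K ι : Type*}

def IsLeadingIndex [Zero K] [LT ι] (v : ι → K) (k : ι) : Prop :=
  v k ≠ 0 ∧ ∀ j < k, v j = 0

theorem exists_isLeadingIndex [Zero K] [LT ι] [WellFoundedLT ι] {v : ι → K} (hv : v ≠ 0) :
    ∃ k, IsLeadingIndex v k := by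
  obtain ⟨k, hk, hmin⟩ := wellFounded_lt.has_min {j | v j ≠ 0} (Function.ne_iff.1 hv)
  exact ⟨k, hk, fun j hj => not_not.1 fun hj0 => hmin j hj0 hj⟩

variable [LinearOrder ι]

theorem IsLeadingIndex.unique [Zero K] {v : ι → K} {k k' : ι} (h : IsLeadingIndex v k)
    (h' : IsLeadingIndex v k') : k = k' :=
  le_antisymm (not_lt.1 fun hlt => h'.1 (h.2 k' hlt)) (not_lt.1 fun hlt => h.1 (h'.2 k hlt))

variable [Fintype ι]

section Semiring

variable [Semiring K]

noncomputable def leadingIndices (W : Submodule K (ι → K)) : Finset ι := by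
  classical exact {k | ∃ w ∈ W, IsLeadingIndex w k}

variable {W : Submodule K (ι → K)}

theorem mem_leadingIndices {k : ι} : k ∈ leadingIndices W ↔ ∃ w ∈ W, IsLeadingIndex w k := by
  simp [leadingIndices]

theorem eq_zero_of_forall_leadingIndices {w : ι → K} (hw : w ∈ W)
    (h : ∀ k ∈ leadingIndices W, w k = 0) : w = 0 := by
  by_contra hne
  obtain ⟨k, hk⟩ := exists_isLeadingIndex hne
  exact hk.1 (h k (mem_leadingIndices.2 ⟨w, hw, hk⟩))

end Semiring

variable [Field K] {W : Submodule K (ι → K)}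

theorem exists_mem_eq_on_leadingIndices (f : leadingIndices W → K) :
    ∃ w ∈ W, ∀ k : leadingIndices W, w k = f k := by
  choose b hbW hb using fun k : leadingIndices W => mem_leadingIndices.1 k.2
  let M : Matrix (leadingIndices W) (leadingIndices W) K := .of fun k j => b k j
  have hM : IsUnit M := by
    rw [Matrix.isUnit_iff_isUnit_det,
      Matrix.det_of_isUpperTriangular (M := M) fun k j hjk => (hb k).2 j hjk, isUnit_iff_ne_zero,
      Finset.prod_ne_zero_iff]
    exact fun k _ => (hb k).1
  obtain ⟨x, rfl⟩ := Matrix.vecMul_surjective_iff_isUnit.2 hM f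
  refine ⟨∑ k, x k • b k, W.sum_mem fun k _ => W.smul_mem _ (hbW k), fun j => ?_⟩
  simp [Matrix.vecMul, dotProduct, M]

variable {e : leadingIndices W → ι → K}

theorem isLeadingIndex_of_eq_on_leadingIndices (heW : ∀ k, e k ∈ W)
    (he : ∀ k k' : leadingIndices W, e k k' = if k = k' then 1 else 0) (k : leadingIndices W) :
    IsLeadingIndex (e k) k := by
  have hne : e k ≠ 0 := fun h => by simpa [h] using he k k
  obtain ⟨j, hj⟩ := exists_isLeadingIndex hne
  obtain rfl : j = k := by
    by_contra h
    have hjW : j ∈ leadingIndices W := mem_leadingIndices.2 ⟨e k, heW k, hj⟩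
    exact hj.1 (by simpa [Subtype.ext_iff, Ne.symm h] using he k ⟨j, hjW⟩)
  exact hj

theorem span_range_eq_of_eq_on_leadingIndices (heW : ∀ k, e k ∈ W)
    (he : ∀ k k' : leadingIndices W, e k k' = if k = k' then 1 else 0) :
    Submodule.span K (Set.range e) = W := by
  refine le_antisymm (Submodule.span_le.2 <| Set.range_subset_iff.2 heW) fun w hw => ?_
  have hsum : ∑ k : leadingIndices W, w k • e k ∈ W := W.sum_mem fun k _ => W.smul_mem _ (heW k)
  have hw_eq : w = ∑ k : leadingIndices W, w k • e k := by
    refine sub_eq_zero.1 (eq_zero_of_forall_leadingIndices (W.sub_mem hw hsum) fun j hj => ?_)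
    simp [Finset.sum_apply, he _ ⟨j, hj⟩]
  rw [hw_eq]
  exact Submodule.sum_mem _ fun k _ => Submodule.smul_mem _ _ (Submodule.subset_span ⟨k, rfl⟩)

end LeadingIndex

section PadRows

variable {α : Type*} [Zero α] {m n : ℕ}

def padRows (v : Fin m → α) : Fin n → α := fun i => if h : (i : ℕ) < m then v ⟨i, h⟩ else 0

theorem padRows_of_lt (v : Fin m → α) {i : Fin n} (h : (i : ℕ) < m) : padRows v i = v ⟨i, h⟩ :=
  dif_pos h

theorem padRows_of_not_lt (v : Fin m → α) {i : Fin n} (h : ¬(i : ℕ) < m) : padRows v i = 0 :=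
  dif_neg h

theorem span_range_padRows {K M : Type*} [Semiring K] [AddCommMonoid M] [Module K M] (hmn : m ≤ n)
    (v : Fin m → M) :
    Submodule.span K (Set.range (padRows v : Fin n → M)) = Submodule.span K (Set.range v) := by
  apply le_antisymm <;> rw [Submodule.span_le] <;> rintro _ ⟨i, rfl⟩
  · by_cases h : (i : ℕ) < m
    · exact Submodule.subset_span ⟨_, (padRows_of_lt v h).symm⟩
    · simp [padRows_of_not_lt v h]
  · exact Submodule.subset_span ⟨Fin.castLE hmn i, padRows_of_lt v i.2⟩

end PadRows

section Pivot

variable {K : Type*} [Field K] {n : ℕ}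

theorem IsPivot.isLeadingIndex {R : Matrix (Fin n) (Fin n) K} {i k : Fin n} (h : IsPivot R i k) :
    IsLeadingIndex (R i) k :=
  ⟨h.1 ▸ one_ne_zero, h.2.1⟩

theorem isRREF_padRows {m : ℕ} (v : Fin m → Fin n → K) (p : Fin m → Fin n) (hp : StrictMono p)
    (hpiv : ∀ i i', v i (p i') = if i = i' then 1 else 0) (hlead : ∀ i, ∀ j < p i, v i j = 0) :
    IsRREF (padRows v : Matrix (Fin n) (Fin n) K) := by
  have hrow_ne : ∀ (i : Fin n) (h : (i : ℕ) < m), padRows v i ≠ 0 := fun i h hi => by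
    simpa [← padRows_of_lt v h, hi] using hpiv ⟨i, h⟩ ⟨i, h⟩
  have hrow_lt : ∀ i : Fin n, padRows v i ≠ 0 → (i : ℕ) < m := fun i hi =>
    not_not.1 fun h => hi (padRows_of_not_lt v h)
  have hpivot : ∀ (i : Fin n) (h : (i : ℕ) < m), IsPivot (padRows v) i (p ⟨i, h⟩) := by
    intro i h
    refine ⟨by simp [padRows_of_lt v h, hpiv], fun j hj => ?_, fun i' hi' => ?_⟩
    · rw [padRows_of_lt v h]; exact hlead _ j hj
    · by_cases h' : (i' : ℕ) < m
      · simp [padRows_of_lt v h', hpiv, Fin.ext_iff, Fin.val_ne_of_ne hi']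
      · simp [padRows_of_not_lt v h']
  have hpivot_eq : ∀ i k, IsPivot (padRows v) i k → ∃ h : (i : ℕ) < m, k = p ⟨i, h⟩ := by
    intro i k hk
    have h := hrow_lt i fun hi => by simpa [hi] using hk.1
    exact ⟨h, hk.isLeadingIndex.unique (hpivot i h).isLeadingIndex⟩
  refine ⟨fun i j hij hi => ?_, fun i hi => ⟨_, hpivot i (hrow_lt i hi)⟩, ?_⟩
  · by_contra hj
    exact hrow_ne i ((Fin.lt_def.1 hij).trans (hrow_lt j hj)) hi
  · intro i i' k k' hii' hk hk'
    obtain ⟨h, rfl⟩ := hpivot_eq i k hk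
    obtain ⟨h', rfl⟩ := hpivot_eq i' k' hk'
    exact hp hii'

end Pivot

/-- Every linear subspace of `Fⁿ` is the row space of some `n × n` reduced row echelon form. -/
theorem exists_rref_rowSpace_eq {F : Type*} [Field F] {n : ℕ}
    (W : Submodule F (Fin n → F)) :
    ∃ R : Matrix (Fin n) (Fin n) F, IsRREF R ∧ Submodule.span F (Set.range R) = W := by
  obtain ⟨e, heW, he⟩ : ∃ e : leadingIndices W → Fin n → F,
      (∀ k, e k ∈ W) ∧ ∀ k k' : leadingIndices W, e k k' = if k = k' then 1 else 0 := by
    choose e heW he using fun k => exists_mem_eq_on_leadingIndices (W := W) (Pi.single k 1)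
    exact ⟨e, heW, fun k k' => by simp [he, Pi.single_apply, eq_comm]⟩
  let τ := (leadingIndices W).orderIsoOfFin rfl
  refine ⟨padRows (e ∘ τ), isRREF_padRows (e ∘ τ) (Subtype.val ∘ τ)
    ((Subtype.strictMono_coe _).comp τ.strictMono) (fun i i' => by simp [he, τ.injective.eq_iff])
    (fun i => (isLeadingIndex_of_eq_on_leadingIndices heW he (τ i)).2), ?_⟩
  refine (span_range_padRows ((Finset.card_le_univ _).trans_eq (Fintype.card_fin n)) _).trans ?_
  rw [EquivLike.range_comp, span_range_eq_of_eq_on_leadingIndices heW he]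
end

section
/- Over a finite field F with q elements, |Gr_F(d,n)| is a monic polynomial expression in q of degree d(n−d) with nonnegative integer coefficients: |Gr_F(d,n)| = Σ_{ℓ=0}^{d(n−d)} c_ℓ q^{d(n−d)−ℓ}, where c_ℓ is the number of tuples (s_1,...,s_d) ∈ S^(d) with Σ_i s_i = ℓ + d(d+1)/2. -/
/-!
Write `G(n, k)` for the number of `k`-dimensional subspaces of `F^n`. Fix a nonzero linear form `f`
on a space of dimension `d + m + 2`. A `(d+1)`-dimensional subspace `W` either lies in the
hyperplane `ker f`, or meets it in a `d`-dimensional subspace `U`; double counting the pairs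
`(W, v)` with `v ∈ W` and `f v = 1`, which correspond to the pairs `(U, v)`, shows that each `U`
arises from exactly `q^(m+1)` such `W`. This gives the `q`-Pascal recursion
`G(d+m+2, d+1) = G(d+m+1, d+1) + q^(m+1) G(d+m+1, d)`.

The generating function `∑ q^|λ|` of the partitions `λ` fitting in a `d × m` box satisfies the same
recursion, by splitting on whether the largest part equals `m`, and has the same initial values.
Finally `s ↦ (m + i + 1 - sᵢ)ᵢ` maps the admissible tuples with `∑ sᵢ = ℓ + d(d+1)/2` bijectively
onto the partitions of size `d m - ℓ` in the box.
-/

theorem Nat.card_subtype_eq_card_and_add_card_not_and {α : Type*} [Finite α] (p r : α → Prop) :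
    Nat.card {x // p x} = Nat.card {x // r x ∧ p x} + Nat.card {x // ¬ r x ∧ p x} := by
  classical
  rw [← Nat.card_sum]
  exact Nat.card_congr <| (Equiv.sumCompl fun x : {x // p x} ↦ r x).symm.trans <|
    ((Equiv.subtypeSubtypeEquivSubtypeInter p r).trans
        (Equiv.subtypeEquivRight fun _ ↦ and_comm)).sumCongr
      ((Equiv.subtypeSubtypeEquivSubtypeInter p (¬ r ·)).trans
        (Equiv.subtypeEquivRight fun _ ↦ and_comm))

section Lattice

variable {α : Type*} [Lattice α] [BoundedOrder α] [IsModularLattice α] {a b c : α}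

theorem IsCompl.sup_inf_eq_of_le (h : IsCompl a b) (hc : c ≤ a) : (c ⊔ b) ⊓ a = c := by
  rw [sup_inf_assoc_of_le b hc, inf_comm, h.inf_eq_bot, sup_bot_eq]

theorem IsCompl.inf_sup_eq_of_le (h : IsCompl a b) (hc : b ≤ c) : c ⊓ a ⊔ b = c := by
  rw [inf_sup_assoc_of_le a hc, h.sup_eq_top, inf_top_eq]

end Lattice

theorem Fin.antitone_cons {α : Type*} [Preorder α] {n : ℕ} {a : α} {t : Fin n → α}
    (ht : Antitone t) (hta : ∀ i, t i ≤ a) : Antitone (Fin.cons a t : Fin (n + 1) → α) := by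
  intro i j hij
  cases i using Fin.cases with
  | zero => cases j using Fin.cases with
    | zero => exact le_rfl
    | succ j => simpa using hta j
  | succ i => cases j using Fin.cases with
    | zero => exact absurd hij (by simp)
    | succ j => simpa using ht (Fin.succ_le_succ_iff.mp hij)

section Partitions

open Finset

/-- Antitone `d`-tuples with entries in `[0, m]`: the partitions fitting in a `d × m` box. -/
def boxTuples (m d : ℕ) : Finset (Fin d → ℕ) :=
  {u ∈ Fintype.piFinset fun _ ↦ range (m + 1) | Antitone u}

variable {m d : ℕ}

theorem mem_boxTuples {u : Fin d → ℕ} : u ∈ boxTuples m d ↔ Antitone u ∧ ∀ i, u i ≤ m := by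
  simp [boxTuples, and_comm]

theorem sum_le_of_mem_boxTuples {u : Fin d → ℕ} (hu : u ∈ boxTuples m d) : ∑ i, u i ≤ d * m :=
  (sum_le_sum fun i _ ↦ (mem_boxTuples.mp hu).2 i).trans (by simp)

variable (m d)

theorem boxTuples_zero_left : boxTuples 0 d = {0} :=
  eq_singleton_iff_unique_mem.mpr ⟨mem_boxTuples.mpr ⟨antitone_const, fun _ ↦ le_rfl⟩,
    fun _ hu ↦ funext fun i ↦ Nat.le_zero.mp ((mem_boxTuples.mp hu).2 i)⟩

theorem boxTuples_zero_right : boxTuples m 0 = {0} :=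
  eq_singleton_iff_unique_mem.mpr ⟨mem_boxTuples.mpr ⟨antitone_const, fun i ↦ i.elim0⟩,
    fun _ _ ↦ Subsingleton.elim _ _⟩

theorem filter_le_boxTuples : {u ∈ boxTuples (m + 1) (d + 1) | u 0 ≤ m} = boxTuples m (d + 1) := by
  ext u
  simp only [mem_filter, mem_boxTuples]
  exact ⟨fun ⟨⟨hu, _⟩, h0⟩ ↦ ⟨hu, fun i ↦ (hu (Fin.zero_le i)).trans h0⟩,
    fun ⟨hu, hm⟩ ↦ ⟨⟨hu, fun i ↦ (hm i).trans m.le_succ⟩, hm 0⟩⟩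

theorem filter_not_le_boxTuples :
    {u ∈ boxTuples (m + 1) (d + 1) | ¬ u 0 ≤ m} =
      (boxTuples (m + 1) d).map ⟨Fin.cons (m + 1), Fin.cons_right_injective _⟩ := by
  ext u
  obtain ⟨a, t, rfl⟩ : ∃ a t, u = Fin.cons a t := ⟨u 0, Fin.tail u, (Fin.cons_self_tail u).symm⟩
  simp only [mem_filter, mem_boxTuples, mem_map, Function.Embedding.coeFn_mk, Fin.cons_inj,
    Fin.forall_fin_succ, Fin.cons_zero, Fin.cons_succ]
  constructor
  · rintro ⟨⟨hu, ha, ht⟩, ham⟩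
    exact ⟨t, ⟨hu.comp_monotone Fin.strictMono_succ.monotone, ht⟩, by omega, rfl⟩
  · rintro ⟨t, ⟨ht, htm⟩, rfl, rfl⟩
    exact ⟨⟨Fin.antitone_cons ht htm, le_rfl, htm⟩, by omega⟩

/-- The Gaussian binomial coefficient `[m + d choose d]_q`, as the generating function of the
partitions in a `d × m` box counted by size. -/
def gaussBinom (q m d : ℕ) : ℕ := ∑ u ∈ boxTuples m d, q ^ ∑ i, u i

variable (q : ℕ)

theorem gaussBinom_zero_left : gaussBinom q 0 d = 1 := by
  simp [gaussBinom, boxTuples_zero_left]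

theorem gaussBinom_zero_right : gaussBinom q m 0 = 1 := by
  simp [gaussBinom, boxTuples_zero_right]

theorem gaussBinom_succ_succ :
    gaussBinom q (m + 1) (d + 1) =
      gaussBinom q m (d + 1) + q ^ (m + 1) * gaussBinom q (m + 1) d := by
  rw [gaussBinom, ← sum_filter_add_sum_filter_not _ (fun u ↦ u 0 ≤ m), filter_le_boxTuples,
    filter_not_le_boxTuples, sum_map, gaussBinom, gaussBinom, mul_sum]
  simp [Fin.sum_cons, pow_add]

variable {m d}

def slack (m : ℕ) (s : Fin d → ℕ) : Fin d → ℕ := fun i ↦ m + i + 1 - s i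

theorem slack_slack {s : Fin d → ℕ} (hs : ∀ i, s i ≤ m + i + 1) : slack m (slack m s) = s :=
  funext fun i ↦ Nat.sub_sub_self (hs i)

theorem sum_slack_add_sum {s : Fin d → ℕ} (hs : ∀ i, s i ≤ m + i + 1) :
    ∑ i, slack m s i + ∑ i, s i = d * m + d * (d + 1) / 2 := by
  have h (i : Fin d) : slack m s i + s i = m + (i + 1) := Nat.sub_add_cancel (hs i)
  have hgauss : ∑ i ∈ range d, (i + 1) = d * (d + 1) / 2 := by
    simpa [sum_range_id, mul_comm] using (sum_range_succ' (fun i ↦ i) d).symm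
  rw [← sum_add_distrib, sum_congr rfl fun i _ ↦ h i,
    Fin.sum_univ_eq_sum_range (fun i ↦ m + (i + 1)), sum_add_distrib, hgauss]
  simp

theorem slack_mem_boxTuples {s : Fin d → ℕ} (h1 : ∀ i, 1 ≤ s i) (hs : StrictMono s)
    (hsm : ∀ i, s i ≤ m + i + 1) : slack m s ∈ boxTuples m d := by
  have hanti : Antitone (slack m s) := (antitone_iff_forall_covBy _).mpr fun i j hij ↦ by
    have := Nat.covBy_iff_add_one_eq.mp (Fin.covBy_iff.mp hij)
    have := hs hij.lt
    have := hsm j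
    simp only [slack]
    omega
  refine mem_boxTuples.mpr
    ⟨hanti, fun i ↦ (hanti (show ⟨0, i.pos⟩ ≤ i from Nat.zero_le _)).trans ?_⟩
  have := h1 ⟨0, i.pos⟩
  simp only [slack]
  omega

theorem admissible_slack_of_mem_boxTuples {u : Fin d → ℕ} (hu : u ∈ boxTuples m d) :
    (∀ i, 1 ≤ slack m u i) ∧ StrictMono (slack m u) ∧ ∀ i, slack m u i ≤ m + i + 1 := by
  obtain ⟨hanti, hum⟩ := mem_boxTuples.mp hu
  refine ⟨fun i ↦ ?_, (strictMono_iff_forall_covBy _).mpr fun i j hij ↦ ?_, fun i ↦ ?_⟩ <;>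
    simp only [slack]
  · have := hum i
    omega
  · have := Nat.covBy_iff_add_one_eq.mp (Fin.covBy_iff.mp hij)
    have := hanti hij.le
    have := hum j
    omega
  · omega

variable (m d)

theorem natCard_admissible_eq_card_filter (ℓ : ℕ) :
    Nat.card {s : Fin d → ℕ // (∀ i, 1 ≤ s i) ∧ StrictMono s ∧
        (∀ i : Fin d, s i ≤ m + (i : ℕ) + 1) ∧ ∑ i, s i = ℓ + d * (d + 1) / 2} =
      #{u ∈ boxTuples m d | d * m - ∑ i, u i = ℓ} := by
  rw [← Nat.card_eq_finsetCard]
  refine Nat.card_congr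
    { toFun s := ⟨slack m s.1, mem_filter.mpr ⟨slack_mem_boxTuples s.2.1 s.2.2.1 s.2.2.2.1, ?_⟩⟩
      invFun u := ⟨slack m u.1, ?_⟩
      left_inv s := Subtype.ext (slack_slack s.2.2.2.1)
      right_inv u := Subtype.ext (slack_slack fun i ↦ ?_) }
  · have := sum_slack_add_sum s.2.2.2.1
    have := s.2.2.2.2
    omega
  · obtain ⟨hu, hℓ⟩ := mem_filter.mp u.2
    obtain ⟨h1, hs, hsm⟩ := admissible_slack_of_mem_boxTuples hu
    have hsum := sum_slack_add_sum hsm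
    rw [slack_slack (m := m) fun i ↦ ((mem_boxTuples.mp hu).2 i).trans (by omega)] at hsum
    have := sum_le_of_mem_boxTuples hu
    exact ⟨h1, hs, hsm, by omega⟩
  · exact ((mem_boxTuples.mp (mem_filter.mp u.2).1).2 i).trans (by omega)

theorem gaussBinom_eq_sum_natCard :
    gaussBinom q m d = ∑ ℓ ∈ range (d * m + 1),
      Nat.card {s : Fin d → ℕ // (∀ i, 1 ≤ s i) ∧ StrictMono s ∧
        (∀ i : Fin d, s i ≤ m + (i : ℕ) + 1) ∧ ∑ i, s i = ℓ + d * (d + 1) / 2} *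
        q ^ (d * m - ℓ) := by
  simp only [natCard_admissible_eq_card_filter]
  rw [gaussBinom, ← sum_fiberwise_of_maps_to (g := fun u ↦ d * m - ∑ i, u i)
    (t := range (d * m + 1)) fun u _ ↦ mem_range.mpr (by omega)]
  refine sum_congr rfl fun ℓ _ ↦ sum_const_nat fun u hu ↦ ?_
  obtain ⟨hu, hℓ⟩ := mem_filter.mp hu
  have := sum_le_of_mem_boxTuples hu
  congr 1
  omega

theorem natCard_admissible_zero_eq_one :
    Nat.card {s : Fin d → ℕ // (∀ i, 1 ≤ s i) ∧ StrictMono s ∧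
        (∀ i : Fin d, s i ≤ m + (i : ℕ) + 1) ∧ ∑ i, s i = 0 + d * (d + 1) / 2} = 1 := by
  rw [natCard_admissible_eq_card_filter, card_eq_one]
  refine ⟨fun _ ↦ m, eq_singleton_iff_unique_mem.mpr ⟨?_, fun u hu ↦ ?_⟩⟩
  · simp [mem_boxTuples, antitone_const]
  · obtain ⟨hu, hsum⟩ := mem_filter.mp hu
    have hle := sum_le_of_mem_boxTuples hu
    have heq : ∑ i, u i = ∑ _i : Fin d, m := by
      simp only [sum_const, card_univ, Fintype.card_fin, smul_eq_mul]
      omega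
    exact funext fun i ↦
      (sum_eq_sum_iff_of_le fun i _ ↦ (mem_boxTuples.mp hu).2 i).mp heq i (mem_univ i)

end Partitions

section Subspaces

open Module LinearMap Submodule

variable {F V : Type*} [Field F] [AddCommGroup V] [Module F V]

theorem Submodule.natCard_le_and_finrank_eq (p : Submodule F V) (k : ℕ) :
    Nat.card {W : Submodule F V // W ≤ p ∧ finrank F W = k} =
      Nat.card {W : Submodule F p // finrank F W = k} :=
  Nat.card_congr <| (Equiv.subtypeSubtypeEquivSubtypeInter (· ≤ p) (finrank F · = k)).symm.trans <|
    ((MapSubtype.orderIso p).toEquiv.subtypeEquiv fun W ↦ by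
      rw [← finrank_map_subtype_eq p W]; rfl).symm

theorem natCard_finrank_eq_zero [FiniteDimensional F V] :
    Nat.card {W : Submodule F V // finrank F W = 0} = 1 := by
  rw [Nat.card_congr (Equiv.subtypeEquivRight fun W ↦ Submodule.finrank_eq_zero), Nat.card_unique]

theorem natCard_finrank_eq_finrank [FiniteDimensional F V] :
    Nat.card {W : Submodule F V // finrank F W = finrank F V} = 1 := by
  rw [Nat.card_congr (Equiv.subtypeEquivRight fun W ↦
    ⟨eq_top_of_finrank_eq, fun h ↦ h ▸ finrank_top F V⟩), Nat.card_unique]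

namespace Module.Dual

variable {f : Dual F V}

section FiniteDimensional

variable [FiniteDimensional F V]

theorem isCompl_ker_span_singleton {v : V} (hv : f v ≠ 0) : IsCompl (ker f) (F ∙ v) := by
  have hv0 : v ≠ 0 := by rintro rfl; exact hv (map_zero f)
  refine isCompl_ker_of_disjoint_of_ne_bot (fun hf ↦ hv (by simp [hf])) ?_ (by simpa using hv0)
  exact (disjoint_span_singleton' hv0).mpr hv

theorem finrank_inf_ker_add_one {W : Submodule F V} {v : V} (hvW : v ∈ W) (hv : f v ≠ 0) :
    finrank F (W ⊓ ker f : Submodule F V) + 1 = finrank F W := by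
  conv_rhs => rw [← (isCompl_ker_span_singleton hv).inf_sup_eq_of_le
    ((span_singleton_le_iff_mem v W).mpr hvW)]
  exact (finrank_sup_span_singleton fun h ↦ hv (mem_inf.mp h).2).symm

theorem finrank_sup_span_singleton_of_le_ker {U : Submodule F V} (hU : U ≤ ker f) {v : V}
    (hv : f v ≠ 0) : finrank F (U ⊔ F ∙ v : Submodule F V) = finrank F U + 1 :=
  finrank_sup_span_singleton fun h ↦ hv (hU h)

def sigmaNotLeKerEquiv (f : Dual F V) (d : ℕ) :
    (Σ W : {W : Submodule F V // ¬ W ≤ ker f ∧ finrank F W = d + 1},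
      {v : V // v ∈ W.1 ∧ f v = 1}) ≃
      {U : Submodule F V // U ≤ ker f ∧ finrank F U = d} × {v : V // f v = 1} where
  toFun p := (⟨p.1.1 ⊓ ker f, inf_le_right, Nat.add_right_cancel <|
      (finrank_inf_ker_add_one p.2.2.1 (ne_of_eq_of_ne p.2.2.2 one_ne_zero)).trans p.1.2.2⟩,
    ⟨p.2.1, p.2.2.2⟩)
  invFun p := ⟨⟨p.1.1 ⊔ F ∙ p.2.1,
      fun h ↦ absurd (h (mem_sup_right (mem_span_singleton_self _)))
        (ne_of_eq_of_ne p.2.2 one_ne_zero),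
      by rw [finrank_sup_span_singleton_of_le_ker p.1.2.1 (ne_of_eq_of_ne p.2.2 one_ne_zero),
        p.1.2.2]⟩,
    ⟨p.2.1, mem_sup_right (mem_span_singleton_self _), p.2.2⟩⟩
  left_inv p := Sigma.subtype_ext (Subtype.ext <|
    (isCompl_ker_span_singleton (ne_of_eq_of_ne p.2.2.2 one_ne_zero)).inf_sup_eq_of_le
      ((span_singleton_le_iff_mem _ _).mpr p.2.2.1)) rfl
  right_inv p := Prod.ext (Subtype.ext <|
    (isCompl_ker_span_singleton (ne_of_eq_of_ne p.2.2 one_ne_zero)).sup_inf_eq_of_le p.1.2.1) rfl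

end FiniteDimensional

variable [Finite V]

theorem natCard_fiber (hf : f ≠ 0) (c : F) :
    Nat.card {v : V // f v = c} = Nat.card F ^ finrank F (ker f) := by
  have e : {v : V // f v = c} ≃ ker f :=
    AddMonoidHom.fiberEquivKerOfSurjective (f := f.toAddMonoidHom) (f.surjective hf) c
  rw [Nat.card_congr e, natCard_eq_pow_finrank (K := F)]

theorem natCard_not_le_ker_mul (hf : f ≠ 0) (d : ℕ) :
    Nat.card {W : Submodule F V // ¬ W ≤ ker f ∧ finrank F W = d + 1} * Nat.card F ^ d =
      Nat.card {U : Submodule F V // U ≤ ker f ∧ finrank F U = d} *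
        Nat.card F ^ finrank F (ker f) := by
  classical
  have : Fintype {W : Submodule F V // ¬ W ≤ ker f ∧ finrank F W = d + 1} := Fintype.ofFinite _
  have hfiber (W : {W : Submodule F V // ¬ W ≤ ker f ∧ finrank F W = d + 1}) :
      Nat.card {v : V // v ∈ W.1 ∧ f v = 1} = Nat.card F ^ d := by
    obtain ⟨w, hwW, hw⟩ := SetLike.not_le_iff_exists.mp W.2.1
    have hg : f.domRestrict W.1 ≠ 0 := fun h ↦ hw (by simpa using congr($h ⟨w, hwW⟩))
    have hrank := finrank_ker_add_one_of_ne_zero hg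
    rw [W.2.2, Nat.add_right_cancel_iff] at hrank
    rw [← Nat.card_congr (Equiv.subtypeSubtypeEquivSubtypeInter (· ∈ W.1) (f · = 1))]
    exact (natCard_fiber hg 1).trans (congrArg _ hrank)
  rw [← natCard_fiber hf 1, ← Nat.card_prod, ← Nat.card_congr (sigmaNotLeKerEquiv f d),
    Nat.card_sigma, Finset.sum_congr rfl fun W _ ↦ hfiber W, Finset.sum_const, Finset.card_univ,
    smul_eq_mul, Nat.card_eq_fintype_card]

theorem natCard_finrank_succ (hf : f ≠ 0) {d k : ℕ} (hk : finrank F (ker f) = d + k) :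
    Nat.card {W : Submodule F V // finrank F W = d + 1} =
      Nat.card {W : Submodule F (ker f) // finrank F W = d + 1} +
        Nat.card F ^ k * Nat.card {W : Submodule F (ker f) // finrank F W = d} := by
  have : Finite F := _root_.Finite.of_surjective f (f.surjective hf)
  rw [Nat.card_subtype_eq_card_and_add_card_not_and _ (· ≤ ker f), natCard_le_and_finrank_eq]
  congr 1
  refine Nat.eq_of_mul_eq_mul_right (pow_pos (Nat.card_pos (α := F)) d) ?_
  rw [natCard_not_le_ker_mul hf, natCard_le_and_finrank_eq, hk, pow_add]
  ring

end Module.Dual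

theorem natCard_finrank_eq_gaussBinom (d m : ℕ) {V : Type*} [AddCommGroup V] [Module F V]
    [Finite V] (hV : finrank F V = d + m) :
    Nat.card {W : Submodule F V // finrank F W = d} = gaussBinom (Nat.card F) m d := by
  induction d generalizing m V with
  | zero => rw [natCard_finrank_eq_zero, gaussBinom_zero_right]
  | succ d ihd =>
    induction m generalizing V with
    | zero => rw [gaussBinom_zero_left, ← hV]; exact natCard_finrank_eq_finrank
    | succ m ihm =>
      have : Nontrivial V := nontrivial_of_finrank_pos (R := F) (by omega)
      obtain ⟨f, hf⟩ := exists_ne (0 : Dual F V)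
      have hker := Dual.finrank_ker_add_one_of_ne_zero hf
      rw [Dual.natCard_finrank_succ hf (k := m + 1) (by omega), ihm (by omega),
        ihd (m + 1) (by omega), gaussBinom_succ_succ]

end Subspaces

/-- Over a finite field with `q` elements, `|Gr_F(d,n)|` is a monic polynomial expression in
`q` of degree `d(n-d)` with nonnegative integer coefficients:
`|Gr_F(d,n)| = ∑_{ℓ=0}^{d(n-d)} c_ℓ q^{d(n-d)-ℓ}`, where `c_ℓ` is the number of tuples in
`S⁽ᵈ⁾` with `∑ᵢ sᵢ = ℓ + d(d+1)/2`; monicity means `c₀ = 1`. -/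
theorem card_grassmannian_polynomial {F : Type*} [Field F] [Fintype F] {q n d : ℕ}
    (hq : Fintype.card F = q) (hd : d ≤ n) :
    Nat.card {W : Submodule F (Fin n → F) // Module.finrank F W = d} =
      (∑ ℓ ∈ Finset.range (d * (n - d) + 1),
        Nat.card {s : Fin d → ℕ // (∀ i : Fin d, 1 ≤ s i) ∧ StrictMono s ∧
            (∀ i : Fin d, s i ≤ n - d + (i : ℕ) + 1) ∧
            ∑ i : Fin d, s i = ℓ + d * (d + 1) / 2} * q ^ (d * (n - d) - ℓ)) ∧
    Nat.card {s : Fin d → ℕ // (∀ i : Fin d, 1 ≤ s i) ∧ StrictMono s ∧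
        (∀ i : Fin d, s i ≤ n - d + (i : ℕ) + 1) ∧
        ∑ i : Fin d, s i = 0 + d * (d + 1) / 2} = 1 := by
  have hdim : Module.finrank F (Fin n → F) = d + (n - d) := by
    rw [Module.finrank_fin_fun]
    omega
  refine ⟨?_, natCard_admissible_zero_eq_one (n - d) d⟩
  rw [natCard_finrank_eq_gaussBinom d (n - d) hdim, Nat.card_eq_fintype_card, hq]
  exact gaussBinom_eq_sum_natCard (n - d) d q
end
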